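/- For every integer n ≥ 1, every t > 0, every ε ∈ ℝ, and every y ∈ ℝ^n, the determinant of the n×n matrix with (i,j) entry q_t(ε·n̲_i, y_j) equals 2^{n²} · (∏_{j=1}^n φ_t(y_j)) · exp(−ε²‖n̲‖²/(2t)) · (∏_{i=1}^n sinh(ε y_i/t)) · ∏_{1 ≤ j < k ≤ n} [sinh²(ε y_j/t) − sinh²(ε y_k/t)]. -/

import Mathlib

/-!
Each entry factors as `q t x y = 2 e^{-x²/2t} φ_t(y) sinh(xy/t)`, which pulls the Gaussian factors
out of the determinant and leaves `det [sinh (n̲ᵢ uⱼ)]` with `uⱼ = ε yⱼ / t`. Since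
`sinh ((2m+1) u) = sinh u · Qₘ(sinh² u)` for a polynomial `Qₘ` of degree `m` with leading
coefficient `4ᵐ`, a triangular change of basis reduces that determinant to `∏ sinh uⱼ` times `4^(n(n-1)/2)`
times a Vandermonde determinant in the `sinh² uⱼ`.
-/

/-- `gauss v z` is the one-dimensional centered Gaussian density of variance `v` at `z`. -/
noncomputable def gauss (v z : ℝ) : ℝ :=
  (Real.sqrt (2 * Real.pi * v))⁻¹ * Real.exp (-z ^ 2 / (2 * v))

/-- `q t x y` is the transition kernel of Brownian motion killed at `0`. -/
noncomputable def q (t x y : ℝ) : ℝ := gauss t (y - x) - gauss t (y + x)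

/-- `nvec n i = 2(n-1-i)+1`, i.e. the vector `(2n-1, 2n-3, …, 3, 1)` (0-based index). -/
def nvec (n : ℕ) (i : Fin n) : ℝ := ((2 * (n - 1 - (i : ℕ)) + 1 : ℕ) : ℝ)

open Polynomial

/-- The recursion is `sinh((2m+5)x) + sinh((2m+1)x) = 2 cosh(2x) sinh((2m+3)x)` with
`cosh(2x) = 1 + 2 sinh² x`. -/
noncomputable def sinhRatioPoly (R : Type*) [CommRing R] : ℕ → R[X]
  | 0 => 1
  | 1 => C 3 + C 4 * X
  | m + 2 => (C 2 + C 4 * X) * sinhRatioPoly R (m + 1) - sinhRatioPoly R m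

section

variable {R : Type*} [CommRing R]

theorem natDegree_sinhRatioPoly_le (m : ℕ) : (sinhRatioPoly R m).natDegree ≤ m := by
  induction m using Nat.twoStepInduction with
  | zero => simp [sinhRatioPoly]
  | one => rw [sinhRatioPoly]; compute_degree
  | more m ih ih1 =>
    rw [sinhRatioPoly]
    have hlin : (C (2 : R) + C 4 * X).natDegree ≤ 1 := by compute_degree
    have hmul := natDegree_mul_le_of_le hlin ih1
    exact (natDegree_sub_le_of_le hmul ih).trans (by omega)

theorem coeff_sinhRatioPoly_self (m : ℕ) : (sinhRatioPoly R m).coeff m = 4 ^ m := by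
  induction m using Nat.twoStepInduction with
  | zero => simp [sinhRatioPoly]
  | one => simp [sinhRatioPoly]
  | more m _ ih1 =>
    have h1 : (sinhRatioPoly R (m + 1)).coeff (m + 2) = 0 :=
      coeff_eq_zero_of_natDegree_lt ((natDegree_sinhRatioPoly_le _).trans_lt (by omega))
    have h0 : (sinhRatioPoly R m).coeff (m + 2) = 0 :=
      coeff_eq_zero_of_natDegree_lt ((natDegree_sinhRatioPoly_le _).trans_lt (by omega))
    rw [sinhRatioPoly, coeff_sub, add_mul, coeff_add, coeff_C_mul, mul_assoc, coeff_C_mul,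
      coeff_X_mul, h0, h1, ih1]
    ring

theorem Matrix.det_of_eval_eq_prod_coeff_mul_det_vandermonde {n : ℕ} (v : Fin n → R)
    (p : Fin n → R[X]) (h_deg : ∀ i, (p i).natDegree ≤ i) :
    (Matrix.of fun i j => (p j).eval (v i)).det = (∏ i, (p i).coeff i) * (vandermonde v).det := by
  rw [eval_matrixOfPolynomials_eq_vandermonde_mul_matrixOfPolynomials v p h_deg, det_mul,
    det_of_isUpperTriangular (matrixOfPolynomials_blockTriangular p h_deg), mul_comm]
  rfl

end

theorem Real.sinh_two_mul_add_one_mul (m : ℕ) (x : ℝ) :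
    Real.sinh ((2 * m + 1) * x) = Real.sinh x * (sinhRatioPoly ℝ m).eval (Real.sinh x ^ 2) := by
  induction m using Nat.twoStepInduction with
  | zero => simp [sinhRatioPoly]
  | one =>
    have h : (2 * ((1 : ℕ) : ℝ) + 1) * x = x + (x + x) := by push_cast; ring
    simp only [sinhRatioPoly, h, Real.sinh_add, Real.cosh_add, eval_add, eval_mul, eval_C, eval_X]
    linear_combination (3 * Real.sinh x) * Real.cosh_sq x
  | more m ih ih1 =>
    have hadd : Real.sinh ((2 * ((m + 2 : ℕ) : ℝ) + 1) * x) + Real.sinh ((2 * (m : ℝ) + 1) * x)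
        = 2 * Real.cosh (2 * x) * Real.sinh ((2 * ((m + 1 : ℕ) : ℝ) + 1) * x) := by
      have e1 : (2 * ((m + 2 : ℕ) : ℝ) + 1) * x = (2 * ((m + 1 : ℕ) : ℝ) + 1) * x + 2 * x := by
        push_cast; ring
      have e2 : (2 * (m : ℝ) + 1) * x = (2 * ((m + 1 : ℕ) : ℝ) + 1) * x - 2 * x := by
        push_cast; ring
      rw [e1, e2, Real.sinh_add, Real.sinh_sub]; ring
    have hcosh : Real.cosh (2 * x) = 1 + 2 * Real.sinh x ^ 2 := by
      rw [Real.cosh_two_mul, Real.cosh_sq]; ring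
    simp only [sinhRatioPoly, eval_sub, eval_mul, eval_add, eval_C, eval_X]
    linear_combination hadd - ih + 2 * Real.cosh (2 * x) * ih1 +
      2 * Real.sinh x * (sinhRatioPoly ℝ (m + 1)).eval (Real.sinh x ^ 2) * hcosh

theorem Fin.prod_Ioi_rev {M : Type*} [CommMonoid M] {n : ℕ} (f : Fin n → Fin n → M) :
    ∏ i : Fin n, ∏ j ∈ Finset.Ioi i, f j.rev i.rev = ∏ i, ∏ j ∈ Finset.Ioi i, f i j := by
  rw [Finset.prod_comm' (t' := Finset.univ) (s' := Finset.Iio) (by simp)]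
  refine Fintype.prod_equiv Fin.revPerm _ _ fun j => ?_
  rw [revPerm_apply, ← rev_rev j, ← map_revPerm_Ioi, Finset.prod_map]
  simp

theorem nvec_rev {n : ℕ} (i : Fin n) : nvec n i.rev = 2 * (i : ℕ) + 1 := by
  rw [nvec, Fin.val_rev]
  push_cast [show n - 1 - (n - (i + 1)) = (i : ℕ) by omega]
  ring

theorem det_sinh_nvec_mul {n : ℕ} (u : Fin n → ℝ) :
    (Matrix.of fun i j => Real.sinh (nvec n i * u j)).det =
      2 ^ (n * (n - 1)) * (∏ j, Real.sinh (u j)) *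
        ∏ j, ∏ k ∈ Finset.Ioi j, (Real.sinh (u j) ^ 2 - Real.sinh (u k) ^ 2) := by
  set s := fun j => Real.sinh (u (Fin.rev j))
  -- reversing rows and columns puts `sinh ((2i+1) ·)` in row `i`, so degrees increase with `i`
  have hrev : ((Matrix.of fun i j => Real.sinh (nvec n i * u j)).submatrix Fin.revPerm Fin.revPerm)
      = (Matrix.of fun (j i : Fin n) => s j * (sinhRatioPoly ℝ i).eval (s j ^ 2)).transpose := by
    ext i j
    simp [s, nvec_rev, Real.sinh_two_mul_add_one_mul]
  have hdiag : ∏ i : Fin n, (sinhRatioPoly ℝ i).coeff i = 2 ^ (n * (n - 1)) := by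
    rw [← Finset.sum_range_id_mul_two, ← Fin.sum_univ_eq_sum_range (fun i => i) n, mul_comm,
      pow_mul, ← Finset.prod_pow_eq_pow_sum]
    norm_num [coeff_sinhRatioPoly_self]
  have hprod : ∏ j, s j = ∏ j, Real.sinh (u j) :=
    Equiv.prod_comp Fin.revPerm fun j => Real.sinh (u j)
  have hcol := Matrix.det_mul_column s
    (Matrix.of fun (j i : Fin n) => (sinhRatioPoly ℝ i).eval (s j ^ 2))
  simp only [Matrix.of_apply] at hcol
  rw [← Matrix.det_submatrix_equiv_self Fin.revPerm, hrev, Matrix.det_transpose, hcol,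
    Matrix.det_of_eval_eq_prod_coeff_mul_det_vandermonde _ _ fun i => natDegree_sinhRatioPoly_le i,
    Matrix.det_vandermonde, hdiag, hprod,
    Fin.prod_Ioi_rev fun j k => Real.sinh (u j) ^ 2 - Real.sinh (u k) ^ 2]
  ring

theorem Matrix.det_of_mul_mul {ι S : Type*} [Fintype ι] [DecidableEq ι] [CommRing S]
    (a b : ι → S) (M : ι → ι → S) :
    (Matrix.of fun i j => a i * b j * M i j).det = (∏ i, a i) * (∏ j, b j) * (Matrix.of M).det := by
  simp only [mul_assoc]
  rw [← det_mul_row, ← det_mul_column]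
  rfl

theorem q_eq_mul_sinh {t : ℝ} (ht : t ≠ 0) (x z : ℝ) :
    q t x z = 2 * Real.exp (-x ^ 2 / (2 * t)) * gauss t z * Real.sinh (x * z / t) := by
  have hsub : -(z - x) ^ 2 / (2 * t) = -z ^ 2 / (2 * t) + -x ^ 2 / (2 * t) + x * z / t := by
    field_simp; ring
  have hadd : -(z + x) ^ 2 / (2 * t) = -z ^ 2 / (2 * t) + -x ^ 2 / (2 * t) + -(x * z / t) := by
    field_simp; ring
  rw [q, gauss, gauss, gauss, hsub, hadd, Real.sinh_eq]
  simp only [Real.exp_add]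
  ring

theorem stmt6_general (n : ℕ) (t : ℝ) (ht : 0 < t) (ε : ℝ) (y : Fin n → ℝ) :
    Matrix.det (Matrix.of fun i j : Fin n => q t (ε * nvec n i) (y j)) =
      2 ^ (n ^ 2) * (∏ j, gauss t (y j)) *
        Real.exp (-ε ^ 2 * (∑ i, nvec n i ^ 2) / (2 * t)) *
        (∏ i, Real.sinh (ε * y i / t)) *
        ∏ j, ∏ k ∈ Finset.Ioi j,
          (Real.sinh (ε * y j / t) ^ 2 - Real.sinh (ε * y k / t) ^ 2) := by
  have hentry : (fun i j => q t (ε * nvec n i) (y j)) = fun i j =>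
      2 * Real.exp (-(ε * nvec n i) ^ 2 / (2 * t)) * gauss t (y j) *
        Real.sinh (nvec n i * (ε * y j / t)) := by
    ext i j
    rw [q_eq_mul_sinh ht.ne']
    ring_nf
  have hrow : ∏ i, 2 * Real.exp (-(ε * nvec n i) ^ 2 / (2 * t)) =
      2 ^ n * Real.exp (-ε ^ 2 * (∑ i, nvec n i ^ 2) / (2 * t)) := by
    rw [Finset.prod_mul_distrib, ← Real.exp_sum, Finset.mul_sum, Finset.sum_div]
    simp [mul_pow, neg_div]
  have hpow : (2 : ℝ) ^ n * 2 ^ (n * (n - 1)) = 2 ^ (n ^ 2) := by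
    rw [← pow_add]
    congr 1
    cases n with
    | zero => rfl
    | succ m => rw [Nat.add_sub_cancel]; ring
  rw [hentry, Matrix.det_of_mul_mul, det_sinh_nvec_mul, hrow, ← hpow]
  ring

/-- Explicit evaluation of the Karlin–McGregor determinant from the starting
configuration `ε • n̲` with `n̲ = (2n-1, 2n-3, …, 1)`. -/
theorem stmt6 (n : ℕ) (hn : 1 ≤ n) (t : ℝ) (ht : 0 < t) (ε : ℝ) (y : Fin n → ℝ) :
    Matrix.det (Matrix.of fun i j : Fin n => q t (ε * nvec n i) (y j)) =
      2 ^ (n ^ 2) * (∏ j, gauss t (y j)) *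
        Real.exp (-ε ^ 2 * (∑ i, nvec n i ^ 2) / (2 * t)) *
        (∏ i, Real.sinh (ε * y i / t)) *
        ∏ j, ∏ k ∈ Finset.Ioi j,
          (Real.sinh (ε * y j / t) ^ 2 - Real.sinh (ε * y k / t) ^ 2) :=
  stmt6_general n t ht ε y
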